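/- arXiv:1803.07299 — 4 statements merged into one kernel-verified Lean document; each statement's English description precedes it below -/
import Mathlib

section
/- Let G be a (q+1)-regular graph, ψ an eigenfunction of H_𝐆 (Schrödinger operator with symmetric potential U and Kirchhoff conditions with coupling α) with eigenvalue λ, and let ψ̊ be its restriction to vertices. Then A_G ψ̊ = w(λ) ψ̊, where w(λ) = (q+1)c(λ) + α s(λ). -/
open Set

/-! The Wronskian of two solutions of `y'' = p y` is constant on `[0, L]`. For `C` and the
reflected solution `S (L - ·)`, which solves the same equation because the potential is
symmetric, this gives `S'(L) = C(L)`. For `S` and the edge function `ψ u v` it then gives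
`S(L) ψ_{vu}'(0) = ψ(u) - C(L) ψ(v)`; summing over the `q + 1` neighbours `u` of `v` and using
the Kirchhoff condition yields the claim. -/

theorem deriv_deriv_comp_const_sub {E : Type*} [NormedAddCommGroup E] [NormedSpace ℝ E]
    (f : ℝ → E) (a x : ℝ) :
    deriv (deriv fun y ↦ f (a - y)) x = deriv (deriv f) (a - x) := by
  have h : (deriv fun y ↦ f (a - y)) = fun y ↦ -deriv f (a - y) :=
    funext fun _ ↦ deriv_comp_const_sub _ _ _
  rw [h, deriv.fun_neg, deriv_comp_const_sub, neg_neg]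

theorem wronskian_eq_of_ode {E : Type*} [NormedAddCommGroup E] [NormedSpace ℝ E]
    {p f : ℝ → ℝ} {g : ℝ → E} {a b : ℝ} (hab : a ≤ b)
    (hf : ContDiff ℝ 2 f) (hg : ContDiff ℝ 2 g)
    (hf'' : ∀ x ∈ Icc a b, deriv (deriv f) x = p x * f x)
    (hg'' : ∀ x ∈ Icc a b, deriv (deriv g) x = p x • g x) :
    f b • deriv g b - deriv f b • g b = f a • deriv g a - deriv f a • g a := by
  have hW : ∀ x ∈ Icc a b, HasDerivAt (fun y ↦ f y • deriv g y - deriv f y • g y) 0 x := by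
    intro x hx
    have h := ((hf.differentiable two_ne_zero x).hasDerivAt.fun_smul
      (hg.differentiable_deriv_two x).hasDerivAt).sub
      ((hf.differentiable_deriv_two x).hasDerivAt.fun_smul
        (hg.differentiable two_ne_zero x).hasDerivAt)
    refine h.congr_deriv ?_
    rw [hf'' x hx, hg'' x hx, smul_smul, mul_comm (p x)]
    abel
  refine constant_of_has_deriv_right_zero (fun x hx ↦ (hW x hx).continuousAt.continuousWithinAt)
    (fun x hx ↦ (hW x (Ico_subset_Icc_self hx)).hasDerivWithinAt) b ⟨hab, le_rfl⟩

theorem ode_comp_const_sub {p f : ℝ → ℝ} {L : ℝ} (hp : ∀ x ∈ Icc 0 L, p (L - x) = p x)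
    (hf : ∀ x ∈ Icc 0 L, deriv (deriv f) x = p x * f x) :
    ∀ x ∈ Icc 0 L, deriv (deriv fun y ↦ f (L - y)) x = p x * f (L - x) := by
  intro x ⟨hx0, hxL⟩
  rw [deriv_deriv_comp_const_sub, hf (L - x) ⟨by linarith, by linarith⟩, hp x ⟨hx0, hxL⟩]

theorem deriv_sin_solution_eq_cos_solution {p C S : ℝ → ℝ} {L : ℝ} (hL : 0 ≤ L)
    (hp : ∀ x ∈ Icc 0 L, p (L - x) = p x) (hC : ContDiff ℝ 2 C) (hS : ContDiff ℝ 2 S)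
    (hC'' : ∀ x ∈ Icc 0 L, deriv (deriv C) x = p x * C x)
    (hS'' : ∀ x ∈ Icc 0 L, deriv (deriv S) x = p x * S x)
    (hC0 : C 0 = 1) (hC0' : deriv C 0 = 0) (hS0 : S 0 = 0) (hS0' : deriv S 0 = 1) :
    deriv S L = C L := by
  have hS_refl : ContDiff ℝ 2 fun y ↦ S (L - y) := hS.comp (contDiff_const.sub contDiff_id)
  have hW := wronskian_eq_of_ode hL hC hS_refl hC'' (ode_comp_const_sub hp hS'')
  simp only [deriv_comp_const_sub, sub_self, sub_zero, hS0, hS0', hC0, hC0', smul_eq_mul] at hW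
  linarith

theorem vertex_restriction_eigenfunction_general
    (V : Type*) [Fintype V]
    (G : SimpleGraph V) [DecidableRel G.Adj]
    (q : ℕ) (hreg : G.IsRegularOfDegree (q + 1))
    (L : ℝ) (hL : 0 < L) (U : ℝ → ℝ)
    (hUsym : ∀ x ∈ Icc (0:ℝ) L, U (L - x) = U x)
    (α lam : ℝ)
    -- fundamental solutions C, S of -ψ'' + Uψ = λψ on [0,L]
    (C S : ℝ → ℝ) (hC : ContDiff ℝ 2 C) (hS : ContDiff ℝ 2 S)
    (hCODE : ∀ x ∈ Icc (0:ℝ) L, deriv (deriv C) x = (U x - lam) * C x)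
    (hSODE : ∀ x ∈ Icc (0:ℝ) L, deriv (deriv S) x = (U x - lam) * S x)
    (hC0 : C 0 = 1) (hC0' : deriv C 0 = 0) (hS0 : S 0 = 0) (hS0' : deriv S 0 = 1)
    -- the eigenfunction: ψ u v is the restriction to the edge (u,v), parametrized from u to v
    (ψ : V → V → ℝ → ℂ) (ψ0 : V → ℂ)
    (hsmooth : ∀ u v, G.Adj u v → ContDiff ℝ 2 (ψ u v))
    (hODE : ∀ u v, G.Adj u v → ∀ x ∈ Icc (0:ℝ) L,
      deriv (deriv (ψ u v)) x = (((U x : ℝ) : ℂ) - (lam : ℂ)) * ψ u v x)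
    (hrev : ∀ u v, G.Adj u v → ∀ x, ψ v u x = ψ u v (L - x))
    (hcont0 : ∀ u v, G.Adj u v → ψ u v 0 = ψ0 u)
    (hcontL : ∀ u v, G.Adj u v → ψ u v L = ψ0 v)
    (hkirch : ∀ v, ∑ u ∈ G.neighborFinset v, deriv (ψ v u) 0 = (α : ℂ) * ψ0 v) :
    ∀ v, ∑ u ∈ G.neighborFinset v, ψ0 u
      = ((((q : ℝ) + 1) * C L + α * S L : ℝ) : ℂ) * ψ0 v := by
  have hSC : deriv S L = C L := deriv_sin_solution_eq_cos_solution hL.le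
    (fun x hx ↦ by rw [hUsym x hx]) hC hS hCODE hSODE hC0 hC0' hS0 hS0'
  intro v
  have hψ0 : ∀ u ∈ G.neighborFinset v, ψ0 u = S L * deriv (ψ v u) 0 + C L * ψ0 v := by
    intro u hu
    have huv : G.Adj u v := ((G.mem_neighborFinset v u).1 hu).symm
    have hψ'' : ∀ x ∈ Icc 0 L, deriv (deriv (ψ u v)) x = (U x - lam) • ψ u v x := fun x hx ↦ by
      rw [hODE u v huv x hx, Complex.real_smul]; push_cast; rfl
    have hW := wronskian_eq_of_ode hL.le hS (hsmooth u v huv) hSODE hψ''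
    have hrev' : deriv (ψ v u) 0 = -deriv (ψ u v) L := by
      rw [funext (hrev u v huv), deriv_comp_const_sub, sub_zero]
    simp only [hSC, hS0, hS0', hcont0 u v huv, hcontL u v huv, Complex.real_smul] at hW
    rw [hrev']
    push_cast at hW
    linear_combination hW
  have hcard : (G.neighborFinset v).card = q + 1 := G.card_neighborFinset_eq_degree v ▸ hreg v
  rw [Finset.sum_congr rfl hψ0, Finset.sum_add_distrib, ← Finset.mul_sum, hkirch v,
    Finset.sum_const, hcard]
  push_cast
  ring

/-- If `ψ` is an eigenfunction of the equilateral `(q+1)`-regular quantum graph with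
symmetric potential `U` and Kirchhoff conditions with coupling `α`, with eigenvalue `λ`,
then its vertex restriction `ψ0` satisfies `A_G ψ0 = w(λ) ψ0` with
`w(λ) = (q+1) c(λ) + α s(λ)`. -/
theorem vertex_restriction_eigenfunction
    (V : Type*) [Fintype V] [DecidableEq V]
    (G : SimpleGraph V) [DecidableRel G.Adj]
    (q : ℕ) (hreg : G.IsRegularOfDegree (q + 1))
    (L : ℝ) (hL : 0 < L) (U : ℝ → ℝ)
    (hUsym : ∀ x ∈ Icc (0:ℝ) L, U (L - x) = U x)
    (α lam : ℝ)
    -- fundamental solutions C, S of -ψ'' + Uψ = λψ on [0,L]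
    (C S : ℝ → ℝ) (hC : ContDiff ℝ 2 C) (hS : ContDiff ℝ 2 S)
    (hCODE : ∀ x ∈ Icc (0:ℝ) L, deriv (deriv C) x = (U x - lam) * C x)
    (hSODE : ∀ x ∈ Icc (0:ℝ) L, deriv (deriv S) x = (U x - lam) * S x)
    (hC0 : C 0 = 1) (hC0' : deriv C 0 = 0) (hS0 : S 0 = 0) (hS0' : deriv S 0 = 1)
    (hs : S L ≠ 0)
    -- the eigenfunction: ψ u v is the restriction to the edge (u,v), parametrized from u to v
    (ψ : V → V → ℝ → ℂ) (ψ0 : V → ℂ)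
    (hsmooth : ∀ u v, G.Adj u v → ContDiff ℝ 2 (ψ u v))
    (hODE : ∀ u v, G.Adj u v → ∀ x ∈ Icc (0:ℝ) L,
      deriv (deriv (ψ u v)) x = (((U x : ℝ) : ℂ) - (lam : ℂ)) * ψ u v x)
    (hrev : ∀ u v, G.Adj u v → ∀ x, ψ v u x = ψ u v (L - x))
    (hcont0 : ∀ u v, G.Adj u v → ψ u v 0 = ψ0 u)
    (hcontL : ∀ u v, G.Adj u v → ψ u v L = ψ0 v)
    (hkirch : ∀ v, ∑ u ∈ G.neighborFinset v, deriv (ψ v u) 0 = (α : ℂ) * ψ0 v) :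
    ∀ v, ∑ u ∈ G.neighborFinset v, ψ0 u
      = ((((q : ℝ) + 1) * C L + α * S L : ℝ) : ℂ) * ψ0 v :=
  vertex_restriction_eigenfunction_general V G q hreg L hL U hUsym α lam C S hC hS hCODE hSODE hC0
    hC0' hS0 hS0' ψ ψ0 hsmooth hODE hrev hcont0 hcontL hkirch
end

section
/- For q ≥ 2 and λ ∈ (-2√q, 2√q), with μ^- = (λ - i√(4q-λ²))/(2q) and G^λ(v,w) = (μ^-)^{d(v,w)}/((q+1)μ^- - λ), one has for each d ≥ 0: Im G^λ at distance d divided by Im G^λ at distance 0 equals the spherical function Φ_λ(d) defined by the recursion Φ_λ(d)=(1/q)(λΦ_λ(d-1)-Φ_λ(d-2)), Φ_λ(0)=1, Φ_λ(1)=λ/(q+1). -/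
/-!
`μ⁻` is a root of `q μ² - λ μ + 1 = 0`, a quadratic with real coefficients, so both
`d ↦ Im((μ⁻)^d / D)` and `d ↦ Φ_λ(d) · Im(1 / D)`, where `D = (q+1) μ⁻ - λ`, solve the second order
linear recurrence defining `Φ_λ`. They agree at `d = 0` trivially and at `d = 1` because
`μ⁻ = (D + λ) / (q + 1)`.
-/

open Complex

noncomputable def sphericalRecurrence (q lam : ℝ) : LinearRecurrence ℝ := ⟨2, ![-q⁻¹, lam / q]⟩

theorem sphericalRecurrence_isSolution_iff {q lam : ℝ} {u : ℕ → ℝ} :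
    (sphericalRecurrence q lam).IsSolution u ↔ ∀ n, u (n + 2) = lam / q * u (n + 1) - u n / q := by
  show (∀ n, u (n + 2) = ∑ i : Fin 2, ![-q⁻¹, lam / q] i * u (n + i)) ↔ _
  simp only [Fin.sum_univ_two, Matrix.cons_val_zero, Matrix.cons_val_one, Fin.val_zero,
    Fin.val_one, add_zero]
  refine forall_congr' fun n => ?_
  constructor <;> intro h <;> rw [h] <;> ring

theorem sphericalRecurrence_isSolution_im_pow_div {q lam : ℝ} (hq : q ≠ 0) {μ : ℂ}
    (hμ : q * μ ^ 2 = lam * μ - 1) (w : ℂ) :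
    (sphericalRecurrence q lam).IsSolution fun n => (μ ^ n / w).im := by
  refine sphericalRecurrence_isSolution_iff.2 fun n => ?_
  have hqC : (q : ℂ) ≠ 0 := ofReal_ne_zero.2 hq
  have : μ ^ (n + 2) = ((lam / q : ℝ) : ℂ) * μ ^ (n + 1) - ((q⁻¹ : ℝ) : ℂ) * μ ^ n := by
    push_cast
    field_simp
    linear_combination μ ^ n * hμ
  rw [this, sub_div, mul_div_assoc, mul_div_assoc, sub_im, im_ofReal_mul, im_ofReal_mul]
  ring

theorem sphericalRecurrence_isSolution_mul_const {q lam : ℝ} {Φ : ℕ → ℝ}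
    (hΦ : ∀ d, 2 ≤ d → Φ d = (1 / q) * (lam * Φ (d - 1) - Φ (d - 2))) (c : ℝ) :
    (sphericalRecurrence q lam).IsSolution fun n => Φ n * c := by
  refine sphericalRecurrence_isSolution_iff.2 fun n => ?_
  have h := hΦ (n + 2) le_add_self
  simp only [Nat.reduceSubDiff, Nat.add_sub_cancel] at h
  rw [h]
  ring

theorem mul_sq_eq_mul_sub_one_of_eq {q lam : ℝ} (hq : q ≠ 0) (hlam : lam ^ 2 ≤ 4 * q) {μ : ℂ}
    (hμ : μ = (lam - I * (√(4 * q - lam ^ 2) : ℝ)) / (2 * q)) :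
    q * μ ^ 2 = lam * μ - 1 := by
  set s : ℂ := I * (√(4 * q - lam ^ 2) : ℝ)
  have hdisc : discrim (q : ℂ) (-lam) 1 = s * s := by
    rw [discrim, mul_mul_mul_comm, I_mul_I, ← ofReal_mul, Real.mul_self_sqrt (by linarith)]
    push_cast
    ring
  have hzero :=
    (quadratic_eq_zero_iff (ofReal_ne_zero.2 hq) hdisc μ).2 (Or.inr (by rw [hμ, neg_neg]))
  linear_combination hzero

theorem im_div_eq_mul_im_one_div {c : ℝ} (hc : c ≠ 0) (lam : ℝ) (μ : ℂ) :
    (μ / (c * μ - lam)).im = lam / c * (1 / (c * μ - lam)).im := by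
  set D : ℂ := c * μ - lam with hD
  rcases eq_or_ne D 0 with h | h
  · simp [h] -- both sides are `0`, as `x / 0 = 0`
  have hcC : (c : ℂ) ≠ 0 := ofReal_ne_zero.2 hc
  have : μ / D = ((1 / c : ℝ) : ℂ) + ((lam / c : ℝ) : ℂ) * (1 / D) := by
    push_cast
    field_simp
    rw [hD]
    ring
  rw [this, add_im, ofReal_im, im_ofReal_mul, zero_add]

theorem green_imaginary_part_spherical_general
    (q : ℕ) (lam : ℝ) (hlam : |lam| < 2 * Real.sqrt q)
    (μ : ℂ)
    (hμ : μ = ((lam : ℂ) - Complex.I * (Real.sqrt (4 * q - lam ^ 2) : ℝ)) / (2 * q))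
    (Φ : ℕ → ℝ) (h0 : Φ 0 = 1) (h1 : Φ 1 = lam / (q + 1))
    (hrec : ∀ d : ℕ, 2 ≤ d → Φ d = (1 / q) * (lam * Φ (d - 1) - Φ (d - 2))) :
    ∀ d : ℕ, (μ ^ d / (((q : ℂ) + 1) * μ - (lam : ℂ))).im
      = Φ d * (1 / (((q : ℂ) + 1) * μ - (lam : ℂ))).im := by
  have hq : (q : ℝ) ≠ 0 := by
    have : 0 < √(q : ℝ) := by linarith [abs_nonneg lam]
    exact (Real.sqrt_pos.1 this).ne'
  have hlam2 : lam ^ 2 ≤ 4 * q := by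
    have := sq_le_sq' (abs_lt.1 hlam).1.le (abs_lt.1 hlam).2.le
    rw [mul_pow, Real.sq_sqrt (Nat.cast_nonneg q)] at this
    linarith
  have hroot := mul_sq_eq_mul_sub_one_of_eq hq hlam2 (by exact_mod_cast hμ)
  set D : ℂ := ((q : ℂ) + 1) * μ - lam
  suffices (fun d => (μ ^ d / D).im) = fun d => Φ d * (1 / D).im from congrFun this
  refine ((sphericalRecurrence q lam).eq_iff_eqOn_range_order _ _
    (sphericalRecurrence_isSolution_im_pow_div hq hroot D)
    (sphericalRecurrence_isSolution_mul_const hrec (1 / D).im)).2 fun n hn => ?_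
  obtain rfl | rfl : n = 0 ∨ n = 1 := by simp [sphericalRecurrence] at hn; omega
  · simp [h0]
  · simp only [D, pow_one, h1]
    exact_mod_cast im_div_eq_mul_im_one_div (c := q + 1) (by positivity) lam μ

/-- For `q ≥ 2`, `λ ∈ (-2√q, 2√q)`, `μ⁻ = (λ - i√(4q-λ²))/(2q)` and
`G^λ(d) = (μ⁻)^d/((q+1)μ⁻ - λ)`: for each `d`, `Im G^λ(d) / Im G^λ(0)` equals the spherical
function `Φ_λ(d)`, i.e. `Im((μ⁻)^d/((q+1)μ⁻-λ)) = Φ_λ(d) · Im(1/((q+1)μ⁻-λ))`. -/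
theorem green_imaginary_part_spherical
    (q : ℕ) (hq : 2 ≤ q) (lam : ℝ) (hlam : |lam| < 2 * Real.sqrt q)
    (μ : ℂ)
    (hμ : μ = ((lam : ℂ) - Complex.I * (Real.sqrt (4 * q - lam ^ 2) : ℝ)) / (2 * q))
    (Φ : ℕ → ℝ) (h0 : Φ 0 = 1) (h1 : Φ 1 = lam / (q + 1))
    (hrec : ∀ d : ℕ, 2 ≤ d → Φ d = (1 / q) * (lam * Φ (d - 1) - Φ (d - 2))) :
    ∀ d : ℕ, (μ ^ d / (((q : ℂ) + 1) * μ - (lam : ℂ))).im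
      = Φ d * (1 / (((q : ℂ) + 1) * μ - (lam : ℂ))).im :=
  green_imaginary_part_spherical_general q lam hlam μ hμ Φ h0 h1 hrec
end

section
/- Let ψ be an eigenfunction of H_{𝐆_N} (equilateral (q+1)-regular quantum graph, symmetric potential U, Kirchhoff coupling α) with eigenvalue λ ∉ σ₂ (i.e. s(λ) ≠ 0), and let ψ̊ be its vertex restriction. Then ‖ψ‖²_{L²(𝐆_N)} = [ ((q+1)/s²(λ)) ∫_0^L S_λ²(x)dx + (w(λ)/s²(λ)) ∫_0^L S_λ(L-x)S_λ(x)dx ] · ‖ψ̊‖²_{ℓ²(V_N)}. -/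
/-!
On each edge the eigenfunction solves `y'' = (U - λ) y`, so Wronskian identities with the
fundamental system `C, S` give `ψ(x) = C(x) ψ(o) + S(x) ψ'(o)`. Because `U` is symmetric,
`x ↦ S(L - x)` is again a solution, whence `S(L - x) = S(L) C(x) - C(L) S(x)` and
`ψ(x) = (S(L - x) ψ(o) + S(x) ψ(t)) / S(L)`. Integrating `|ψ|²` over an edge weights the endpoint
norms by `∫ S²` and the cross term `Re (conj ψ(o) ψ(t))` by `∫ S(L - x) S(x)`. Substituting
`ψ'(o) = (ψ(t) - C(L) ψ(o)) / S(L)` into Kirchhoff's condition gives `A ψ̊ = w(λ) ψ̊`, so summing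
over the directed edges of the regular graph turns the cross terms into `w(λ) ‖ψ̊‖²`.
-/

open Set Finset

section InnerProduct

variable {F : Type*} [NormedAddCommGroup F] [InnerProductSpace ℝ F]

theorem integral_norm_smul_add_smul_sq {f g : ℝ → ℝ} (hf : Continuous f) (hg : Continuous g)
    (a b : F) (l u : ℝ) :
    ∫ x in l..u, ‖f x • a + g x • b‖ ^ 2
      = (∫ x in l..u, f x ^ 2) * ‖a‖ ^ 2 + (∫ x in l..u, g x ^ 2) * ‖b‖ ^ 2
        + 2 * (∫ x in l..u, f x * g x) * inner ℝ a b := by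
  have hpt : ∀ x, ‖f x • a + g x • b‖ ^ 2
      = f x ^ 2 * ‖a‖ ^ 2 + g x ^ 2 * ‖b‖ ^ 2 + f x * g x * (2 * inner ℝ a b) := fun x ↦ by
    rw [norm_add_sq_real, norm_smul, norm_smul, real_inner_smul_left, real_inner_smul_right,
      mul_pow, mul_pow, Real.norm_eq_abs, Real.norm_eq_abs, sq_abs, sq_abs]
    ring
  simp_rw [hpt]
  have hi : ∀ h : ℝ → ℝ, Continuous h → IntervalIntegrable h MeasureTheory.volume l u :=
    fun h hh ↦ hh.intervalIntegrable l u
  rw [intervalIntegral.integral_add (hi _ (by fun_prop)) (hi _ (by fun_prop)),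
    intervalIntegral.integral_add (hi _ (by fun_prop)) (hi _ (by fun_prop)),
    intervalIntegral.integral_mul_const, intervalIntegral.integral_mul_const,
    intervalIntegral.integral_mul_const]
  ring

end InnerProduct

section SecondOrder

variable {E : Type*} [NormedAddCommGroup E] [NormedSpace ℝ E]

def SolvesOn (P : ℝ → ℝ) (s : Set ℝ) (f : ℝ → E) : Prop :=
  ContDiff ℝ 2 f ∧ ∀ x ∈ s, deriv (deriv f) x = P x • f x

structure IsFundamentalSystem (P : ℝ → ℝ) (L : ℝ) (C S : ℝ → ℝ) : Prop where
  solvesOn_C : SolvesOn P (Icc 0 L) C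
  solvesOn_S : SolvesOn P (Icc 0 L) S
  C_zero : C 0 = 1
  deriv_C_zero : deriv C 0 = 0
  S_zero : S 0 = 0
  deriv_S_zero : deriv S 0 = 1

variable {P : ℝ → ℝ} {L : ℝ} {C S : ℝ → ℝ}

theorem SolvesOn.wronskian_eq {a b : ℝ} {g : ℝ → ℝ} {f : ℝ → E}
    (hg : SolvesOn P (Icc a b) g) (hf : SolvesOn P (Icc a b) f) :
    ∀ x ∈ Icc a b, g x • deriv f x - deriv g x • f x = g a • deriv f a - deriv g a • f a := by
  have hW : ∀ x, HasDerivAt (fun y ↦ g y • deriv f y - deriv g y • f y)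
      (g x • deriv (deriv f) x - deriv (deriv g) x • f x) x := fun x ↦
    (((hg.1.differentiable two_ne_zero x).hasDerivAt.smul
      (hf.1.differentiable_deriv_two x).hasDerivAt).sub
      ((hg.1.differentiable_deriv_two x).hasDerivAt.smul
        (hf.1.differentiable two_ne_zero x).hasDerivAt)).congr_deriv (by abel)
  refine constant_of_has_deriv_right_zero
    (continuous_iff_continuousAt.2 fun x ↦ (hW x).continuousAt).continuousOn fun x hx ↦ ?_
  have hx' := Ico_subset_Icc_self hx
  simpa [hg.2 x hx', hf.2 x hx', smul_smul, mul_comm] using (hW x).hasDerivWithinAt (s := Ici x)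

theorem IsFundamentalSystem.eq_smul_add_smul (h : IsFundamentalSystem P L C S)
    {f : ℝ → E} (hf : SolvesOn P (Icc 0 L) f) :
    ∀ x ∈ Icc 0 L, f x = C x • f 0 + S x • deriv f 0 := by
  intro x hx
  have hSf := h.solvesOn_S.wronskian_eq hf x hx
  have hCf := h.solvesOn_C.wronskian_eq hf x hx
  have hCS := h.solvesOn_C.wronskian_eq h.solvesOn_S x hx
  simp only [h.C_zero, h.deriv_C_zero, h.S_zero, h.deriv_S_zero, smul_eq_mul] at hSf hCf hCS
  linear_combination (norm := module) S x • hCf - C x • hSf - hCS • f x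

theorem SolvesOn.comp_const_sub (hP : ∀ x ∈ Icc 0 L, P (L - x) = P x) {f : ℝ → E}
    (hf : SolvesOn P (Icc 0 L) f) : SolvesOn P (Icc 0 L) (fun x ↦ f (L - x)) := by
  refine ⟨hf.1.comp (contDiff_const.sub contDiff_id), fun x hx ↦ ?_⟩
  have hx' : L - x ∈ Icc 0 L := ⟨by linarith [hx.2], by linarith [hx.1]⟩
  have hd : deriv (fun x ↦ f (L - x)) = fun x ↦ -deriv f (L - x) :=
    funext fun _ ↦ deriv_comp_const_sub _ _ _
  rw [hd, deriv.fun_neg, deriv_comp_const_sub (deriv f), neg_neg, hf.2 _ hx', hP x hx]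

theorem IsFundamentalSystem.S_const_sub_eq (h : IsFundamentalSystem P L C S)
    (hP : ∀ x ∈ Icc 0 L, P (L - x) = P x) :
    ∀ x ∈ Icc 0 L, S (L - x) = S L * C x - deriv S L * S x := by
  intro x hx
  have := h.eq_smul_add_smul (h.solvesOn_S.comp_const_sub hP) x hx
  simp only [sub_zero, deriv_comp_const_sub, smul_eq_mul] at this
  linear_combination this

theorem IsFundamentalSystem.deriv_S_eq_C (h : IsFundamentalSystem P L C S)
    (hP : ∀ x ∈ Icc 0 L, P (L - x) = P x) (hL : 0 ≤ L) (hSL : S L ≠ 0) :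
    deriv S L = C L := by
  have := h.S_const_sub_eq hP L ⟨hL, le_rfl⟩
  rw [sub_self, h.S_zero] at this
  exact mul_right_cancel₀ hSL (by linear_combination this)

theorem IsFundamentalSystem.deriv_zero_eq (h : IsFundamentalSystem P L C S) (hL : 0 ≤ L)
    (hSL : S L ≠ 0) {f : ℝ → E} (hf : SolvesOn P (Icc 0 L) f) :
    deriv f 0 = (S L)⁻¹ • (f L - C L • f 0) := by
  rw [h.eq_smul_add_smul hf L ⟨hL, le_rfl⟩, add_sub_cancel_left, inv_smul_smul₀ hSL]

theorem IsFundamentalSystem.eq_interpolation (h : IsFundamentalSystem P L C S)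
    (hP : ∀ x ∈ Icc 0 L, P (L - x) = P x) (hL : 0 ≤ L) (hSL : S L ≠ 0)
    {f : ℝ → E} (hf : SolvesOn P (Icc 0 L) f) :
    ∀ x ∈ Icc 0 L, f x = (S L)⁻¹ • (S (L - x) • f 0 + S x • f L) := by
  intro x hx
  rw [h.eq_smul_add_smul hf x hx, h.deriv_zero_eq hL hSL hf, h.S_const_sub_eq hP x hx,
    h.deriv_S_eq_C hP hL hSL]
  match_scalars <;> field_simp; ring

theorem IsFundamentalSystem.integral_norm_sq_eq {F : Type*} [NormedAddCommGroup F]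
    [InnerProductSpace ℝ F] (h : IsFundamentalSystem P L C S)
    (hP : ∀ x ∈ Icc 0 L, P (L - x) = P x) (hL : 0 ≤ L) (hSL : S L ≠ 0)
    {f : ℝ → F} (hf : SolvesOn P (Icc 0 L) f) :
    ∫ x in 0..L, ‖f x‖ ^ 2
      = ((∫ x in 0..L, S x ^ 2) * ‖f 0‖ ^ 2 + (∫ x in 0..L, S x ^ 2) * ‖f L‖ ^ 2
        + 2 * (∫ x in 0..L, S (L - x) * S x) * inner ℝ (f 0) (f L)) / S L ^ 2 := by
  have hS : Continuous S := h.solvesOn_S.1.continuous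
  calc ∫ x in 0..L, ‖f x‖ ^ 2
      = ∫ x in 0..L, ‖(S L)⁻¹ • (S (L - x) • f 0 + S x • f L)‖ ^ 2 :=
        intervalIntegral.integral_congr fun x hx ↦ by
          rw [h.eq_interpolation hP hL hSL hf x (uIcc_of_le hL ▸ hx)]
    _ = (∫ x in 0..L, ‖S (L - x) • f 0 + S x • f L‖ ^ 2) / S L ^ 2 := by
        simp_rw [norm_smul, mul_pow, norm_inv, Real.norm_eq_abs, inv_pow, sq_abs,
          intervalIntegral.integral_const_mul, inv_mul_eq_div]
    _ = _ := by
        rw [integral_norm_smul_add_smul_sq (by fun_prop) hS,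
          intervalIntegral.integral_comp_sub_left (fun x ↦ S x ^ 2), sub_self, sub_zero]

end SecondOrder

namespace SimpleGraph

variable {V M : Type*} [Fintype V] {G : SimpleGraph V} [DecidableRel G.Adj] {d : ℕ}

theorem sum_sum_neighborFinset_left [AddCommMonoid M] (hreg : G.IsRegularOfDegree d) (h : V → M) :
    ∑ u, ∑ _v ∈ G.neighborFinset u, h u = d • ∑ u, h u := by
  simp_rw [sum_const, card_neighborFinset_eq_degree, hreg.degree_eq, smul_sum]

theorem sum_sum_neighborFinset_right [AddCommMonoid M] (hreg : G.IsRegularOfDegree d) (h : V → M) :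
    ∑ u, ∑ v ∈ G.neighborFinset u, h v = d • ∑ v, h v := by
  rw [sum_comm' (t' := univ) (s' := fun v ↦ G.neighborFinset v) (by simp [adj_comm])]
  exact sum_sum_neighborFinset_left hreg h

theorem sum_sum_neighborFinset_inner [NormedAddCommGroup M] [InnerProductSpace ℝ M] {x : V → M}
    {w : ℝ} (hx : ∀ u, ∑ v ∈ G.neighborFinset u, x v = w • x u) :
    ∑ u, ∑ v ∈ G.neighborFinset u, inner ℝ (x u) (x v) = w * ∑ u, ‖x u‖ ^ 2 := by
  simp_rw [← inner_sum, hx, real_inner_smul_right, real_inner_self_eq_norm_sq, mul_sum]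

end SimpleGraph

theorem eigenfunction_norm_identity_general
    (V : Type*) [Fintype V]
    (G : SimpleGraph V) [DecidableRel G.Adj]
    (q : ℕ) (hreg : G.IsRegularOfDegree (q + 1))
    (L : ℝ) (hL : 0 < L) (U : ℝ → ℝ)
    (hUsym : ∀ x ∈ Icc (0:ℝ) L, U (L - x) = U x)
    (α lam : ℝ)
    (C S : ℝ → ℝ) (hC : ContDiff ℝ 2 C) (hS : ContDiff ℝ 2 S)
    (hCODE : ∀ x ∈ Icc (0:ℝ) L, deriv (deriv C) x = (U x - lam) * C x)
    (hSODE : ∀ x ∈ Icc (0:ℝ) L, deriv (deriv S) x = (U x - lam) * S x)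
    (hC0 : C 0 = 1) (hC0' : deriv C 0 = 0) (hS0 : S 0 = 0) (hS0' : deriv S 0 = 1)
    (hs : S L ≠ 0)
    (ψ : V → V → ℝ → ℂ) (ψ0 : V → ℂ)
    (hsmooth : ∀ u v, G.Adj u v → ContDiff ℝ 2 (ψ u v))
    (hODE : ∀ u v, G.Adj u v → ∀ x ∈ Icc (0:ℝ) L,
      deriv (deriv (ψ u v)) x = (((U x : ℝ) : ℂ) - (lam : ℂ)) * ψ u v x)
    (hcont0 : ∀ u v, G.Adj u v → ψ u v 0 = ψ0 u)
    (hcontL : ∀ u v, G.Adj u v → ψ u v L = ψ0 v)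
    (hkirch : ∀ v, ∑ u ∈ G.neighborFinset v, deriv (ψ v u) 0 = (α : ℂ) * ψ0 v) :
    (1 / 2) * ∑ u : V, ∑ v ∈ G.neighborFinset u, (∫ x in (0:ℝ)..L, ‖ψ u v x‖ ^ 2)
      = ((((q : ℝ) + 1) / (S L) ^ 2) * (∫ x in (0:ℝ)..L, (S x) ^ 2)
          + ((((q : ℝ) + 1) * C L + α * S L) / (S L) ^ 2)
              * (∫ x in (0:ℝ)..L, S (L - x) * S x))
        * ∑ v : V, ‖ψ0 v‖ ^ 2 := by
  set P : ℝ → ℝ := fun x ↦ U x - lam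
  have hfund : IsFundamentalSystem P L C S :=
    ⟨⟨hC, hCODE⟩, ⟨hS, hSODE⟩, hC0, hC0', hS0, hS0'⟩
  have hP : ∀ x ∈ Icc 0 L, P (L - x) = P x := fun x hx ↦ by simp only [P, hUsym x hx]
  have hψ : ∀ u v, G.Adj u v → SolvesOn P (Icc 0 L) (ψ u v) := fun u v huv ↦
    ⟨hsmooth u v huv, fun x hx ↦ by rw [hODE u v huv x hx, Complex.real_smul, Complex.ofReal_sub]⟩
  have hD : ∀ u, ∀ v ∈ G.neighborFinset u,
      deriv (ψ u v) 0 = (S L)⁻¹ • (ψ0 v - C L • ψ0 u) := fun u v hv ↦ by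
    have huv := (G.mem_neighborFinset u v).1 hv
    rw [hfund.deriv_zero_eq hL.le hs (hψ u v huv), hcont0 u v huv, hcontL u v huv]
  have heig : ∀ u, ∑ v ∈ G.neighborFinset u, ψ0 v
      = (((q : ℝ) + 1) * C L + α * S L) • ψ0 u := fun u ↦ by
    have hk := hkirch u
    rw [sum_congr rfl (hD u), ← smul_sum, sum_sub_distrib, sum_const,
      G.card_neighborFinset_eq_degree, hreg.degree_eq, ← Complex.real_smul,
      inv_smul_eq_iff₀ hs] at hk
    linear_combination (norm := module) hk
  have hedge : ∀ u, ∀ v ∈ G.neighborFinset u, ∫ x in 0..L, ‖ψ u v x‖ ^ 2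
      = ((∫ x in 0..L, S x ^ 2) * ‖ψ0 u‖ ^ 2 + (∫ x in 0..L, S x ^ 2) * ‖ψ0 v‖ ^ 2
        + 2 * (∫ x in 0..L, S (L - x) * S x) * inner ℝ (ψ0 u) (ψ0 v)) / S L ^ 2 :=
    fun u v hv ↦ by
      have huv := (G.mem_neighborFinset u v).1 hv
      rw [hfund.integral_norm_sq_eq hP hL.le hs (hψ u v huv), hcont0 u v huv, hcontL u v huv]
  rw [sum_congr rfl fun u _ ↦ sum_congr rfl (hedge u)]
  simp_rw [← sum_div, sum_add_distrib, ← mul_sum, G.sum_sum_neighborFinset_left hreg,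
    G.sum_sum_neighborFinset_right hreg, G.sum_sum_neighborFinset_inner heig]
  ring

/-- For an eigenfunction `ψ` of the equilateral `(q+1)`-regular quantum graph with
eigenvalue `λ ∉ σ₂` (i.e. `s(λ) ≠ 0`) and vertex restriction `ψ0`:
`‖ψ‖²_{L²} = [((q+1)/s²)∫S² + (w(λ)/s²)∫S(L-x)S(x)] · ‖ψ0‖²_{ℓ²}`, where the `L²` norm
squared is `(1/2) Σ_{directed edges} ∫_0^L |ψ|²`. -/
theorem eigenfunction_norm_identity
    (V : Type*) [Fintype V] [DecidableEq V]
    (G : SimpleGraph V) [DecidableRel G.Adj]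
    (q : ℕ) (hreg : G.IsRegularOfDegree (q + 1))
    (L : ℝ) (hL : 0 < L) (U : ℝ → ℝ)
    (hUsym : ∀ x ∈ Icc (0:ℝ) L, U (L - x) = U x)
    (α lam : ℝ)
    (C S : ℝ → ℝ) (hC : ContDiff ℝ 2 C) (hS : ContDiff ℝ 2 S)
    (hCODE : ∀ x ∈ Icc (0:ℝ) L, deriv (deriv C) x = (U x - lam) * C x)
    (hSODE : ∀ x ∈ Icc (0:ℝ) L, deriv (deriv S) x = (U x - lam) * S x)
    (hC0 : C 0 = 1) (hC0' : deriv C 0 = 0) (hS0 : S 0 = 0) (hS0' : deriv S 0 = 1)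
    (hs : S L ≠ 0)
    (ψ : V → V → ℝ → ℂ) (ψ0 : V → ℂ)
    (hsmooth : ∀ u v, G.Adj u v → ContDiff ℝ 2 (ψ u v))
    (hODE : ∀ u v, G.Adj u v → ∀ x ∈ Icc (0:ℝ) L,
      deriv (deriv (ψ u v)) x = (((U x : ℝ) : ℂ) - (lam : ℂ)) * ψ u v x)
    (hrev : ∀ u v, G.Adj u v → ∀ x, ψ v u x = ψ u v (L - x))
    (hcont0 : ∀ u v, G.Adj u v → ψ u v 0 = ψ0 u)
    (hcontL : ∀ u v, G.Adj u v → ψ u v L = ψ0 v)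
    (hkirch : ∀ v, ∑ u ∈ G.neighborFinset v, deriv (ψ v u) 0 = (α : ℂ) * ψ0 v) :
    (1 / 2) * ∑ u : V, ∑ v ∈ G.neighborFinset u, (∫ x in (0:ℝ)..L, ‖ψ u v x‖ ^ 2)
      = ((((q : ℝ) + 1) / (S L) ^ 2) * (∫ x in (0:ℝ)..L, (S x) ^ 2)
          + ((((q : ℝ) + 1) * C L + α * S L) / (S L) ^ 2)
              * (∫ x in (0:ℝ)..L, S (L - x) * S x))
        * ∑ v : V, ‖ψ0 v‖ ^ 2 :=
  eigenfunction_norm_identity_general V G q hreg L hL U hUsym α lam C S hC hS hCODE hSODE hC0 hC0'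
    hS0 hS0' hs ψ ψ0 hsmooth hODE hcont0 hcontL hkirch
end

section
/- In the free case U ≡ 0, α = 0, the limiting density is uniform: for λ in the AC spectrum (sin(√λ L) ≠ 0 and |2cos(√λ L)| ≤ 4√q/(q+1)), κ_λ = (q+1)L/2, where κ_λ = ((q+1)/s²(λ))∫_0^L S_λ²(t)dt + (w(λ)/s²(λ))∫_0^L S_λ(L-t)S_λ(t)dt with S_λ(x)=sin(√λ x)/√λ, s(λ)=sin(√λ L)/√λ, w(λ)=(q+1)cos(√λ L). Consequently Ψ_λ(x) := (1/κ_λ)·[S_λ²(L-x)+S_λ²(x)+(2w(λ)/(q+1))S_λ(L-x)S_λ(x)]/s²(λ) = 2/(L(q+1)) for all x ∈ [0,L]. -/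
open Set

/-- In the free case `U ≡ 0`, `α = 0`, for `λ` in the AC spectrum, `κ_λ = (q+1)L/2` and
the limiting density `Ψ_λ(x)` is the uniform density `2/(L(q+1))`. -/
theorem free_case_uniform_density
    (q lam L : ℝ) (hq : 2 ≤ q) (hlam : 0 < lam) (hL : 0 < L)
    (hsin : Real.sin (Real.sqrt lam * L) ≠ 0)
    (hband : |2 * Real.cos (Real.sqrt lam * L)| ≤ 4 * Real.sqrt q / (q + 1)) :
    let S : ℝ → ℝ := fun x => Real.sin (Real.sqrt lam * x) / Real.sqrt lam
    let s : ℝ := S L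
    let w : ℝ := (q + 1) * Real.cos (Real.sqrt lam * L)
    let κ : ℝ := ((q + 1) / s ^ 2) * (∫ t in (0:ℝ)..L, (S t) ^ 2)
        + (w / s ^ 2) * (∫ t in (0:ℝ)..L, S (L - t) * S t)
    κ = (q + 1) * L / 2 ∧
      ∀ x ∈ Icc (0:ℝ) L,
        (1 / κ) * (((S (L - x)) ^ 2 + (S x) ^ 2
            + (2 * w / (q + 1)) * S (L - x) * S x) / s ^ 2)
          = 2 / (L * (q + 1)) := by
  intro S s w κ
  have ha : Real.sqrt lam ≠ 0 := ne_of_gt (Real.sqrt_pos.mpr hlam)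
  have hq1 : q + 1 ≠ 0 := by linarith
  have hs : s ≠ 0 := div_ne_zero hsin ha
  have hs2 : s ^ 2 ≠ 0 := pow_ne_zero _ hs
  set c : ℝ := Real.cos (Real.sqrt lam * L) with hc
  have key : ∀ x : ℝ, S (L - x) ^ 2 + S x ^ 2 + 2 * c * (S (L - x) * S x) = s ^ 2 := by
    intro x
    have hx : Real.sqrt lam * (L - x) = Real.sqrt lam * L - Real.sqrt lam * x := by ring
    simp only [S, s, hx, Real.sin_sub]
    have h1 := Real.sin_sq_add_cos_sq (Real.sqrt lam * x)
    have h2 := Real.sin_sq_add_cos_sq (Real.sqrt lam * L)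
    field_simp
    nlinarith [h1, h2, sq_nonneg (Real.sin (Real.sqrt lam * L)), sq_nonneg (Real.cos (Real.sqrt lam * x))]
  -- continuity / integrability
  have hScont : Continuous S := by fun_prop
  have hSL : Continuous (fun t : ℝ => S (L - t)) := hScont.comp (continuous_const.sub continuous_id)
  have hi1 : IntervalIntegrable (fun t => S (L - t) ^ 2) MeasureTheory.volume 0 L :=
    ((hSL.pow 2).intervalIntegrable 0 L)
  have hi2 : IntervalIntegrable (fun t => S t ^ 2) MeasureTheory.volume 0 L :=
    ((hScont.pow 2).intervalIntegrable 0 L)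
  have hi3 : IntervalIntegrable (fun t => 2 * c * (S (L - t) * S t)) MeasureTheory.volume 0 L :=
    ((continuous_const.mul (hSL.mul hScont)).intervalIntegrable 0 L)
  have hint : (∫ t in (0:ℝ)..L, (S (L - t) ^ 2 + S t ^ 2 + 2 * c * (S (L - t) * S t))) = L * s ^ 2 := by
    rw [intervalIntegral.integral_congr (g := fun _ => s ^ 2) (fun t _ => key t)]
    simp [mul_comm]
  have hsplit : (∫ t in (0:ℝ)..L, (S (L - t) ^ 2 + S t ^ 2 + 2 * c * (S (L - t) * S t)))
      = (∫ t in (0:ℝ)..L, S (L - t) ^ 2) + (∫ t in (0:ℝ)..L, S t ^ 2)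
        + (2 * c) * (∫ t in (0:ℝ)..L, S (L - t) * S t) := by
    rw [intervalIntegral.integral_add (hi1.add hi2) hi3, intervalIntegral.integral_add hi1 hi2,
      intervalIntegral.integral_const_mul]
  have hswap : (∫ t in (0:ℝ)..L, S (L - t) ^ 2) = ∫ t in (0:ℝ)..L, S t ^ 2 := by
    have := intervalIntegral.integral_comp_sub_left (a := (0:ℝ)) (b := L) (fun t => S t ^ 2) L
    simpa using this
  have hIJ : (∫ t in (0:ℝ)..L, S t ^ 2) + c * (∫ t in (0:ℝ)..L, S (L - t) * S t) = L * s ^ 2 / 2 := by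
    rw [hsplit, hswap] at hint
    linarith
  have hκ : κ = (q + 1) * L / 2 := by
    have : κ = ((q + 1) / s ^ 2) * ((∫ t in (0:ℝ)..L, S t ^ 2) + c * (∫ t in (0:ℝ)..L, S (L - t) * S t)) := by
      simp only [κ, w, hc]
      field_simp
    rw [this, hIJ]
    field_simp
  refine ⟨hκ, fun x _ => ?_⟩
  have hnum : S (L - x) ^ 2 + S x ^ 2 + (2 * w / (q + 1)) * S (L - x) * S x = s ^ 2 := by
    have hw : 2 * w / (q + 1) = 2 * c := by field_simp [w]; ring
    rw [hw, ← key x]; ring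
  rw [hnum, hκ, div_self hs2]
  field_simp
end
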